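/- Let k be even with k ≥ 2, write B_k = N_k/D_k in lowest terms, D_k > 0. For every positive integer m, gcd(S_k(m), m^2)/m = gcd(N_k, m)/gcd(D_k, m) (as an identity of rationals, where the left side is an integer divided by m). -/

import Mathlib

/-!
Write `B_k = N / D`. Faulhaber's formula gives
`S_k(m) - B_k m = ∑_{i<k} B_i (k choose i) m^(k+1-i) / (k+1-i)`. By von Staudt–Clausen every
even-index Bernoulli number has squarefree denominator, so `|B_i|_p ≤ p`, and `6 ∣ D`. Since
`v_p(k+1-i) + 3 ≤ (k+1-i) + v_p(6)`, every term of `6 (S_k(m) - B_k m)` is divisible by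
`p^(2 v_p(m))`; multiplying by the integer `D / 6` gives `m^2 ∣ D S_k(m) - N m`. Hence
`gcd(D S_k(m), m^2) = m gcd(N, m)`, and prime by prime the factor `gcd(D, m)` splits off
because `D` is squarefree and coprime to `N`.
-/

def S (k m : ℕ) : ℕ := ∑ j ∈ Finset.Ico 1 m, j ^ k

open Finset

abbrev vonStaudtPrimes (n : ℕ) : Finset ℕ := {q ∈ range (n + 2) | q.Prime ∧ q - 1 ∣ n}

theorem prime_of_mem_vonStaudtPrimes {n q : ℕ} (hq : q ∈ vonStaudtPrimes n) : q.Prime :=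
  (mem_filter.mp hq).2.1

theorem den_sum_one_div_dvd_prod (s : Finset ℕ) : (∑ q ∈ s, (1 : ℚ) / q).den ∣ ∏ q ∈ s, q := by
  refine (Rat.den_sum_dvd_prod_den _ _).trans (prod_dvd_prod_of_dvd _ _ fun q _ => ?_)
  rw [one_div, Rat.inv_natCast_den]
  split_ifs with hq <;> simp [hq]

theorem den_bernoulli_two_mul_dvd_prod (k : ℕ) :
    (bernoulli (2 * k)).den ∣ ∏ q ∈ vonStaudtPrimes (2 * k), q := by
  obtain ⟨T, hT⟩ := Bernoulli.vonStaudt_clausen k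
  have hB : bernoulli (2 * k) = T + -∑ q ∈ vonStaudtPrimes (2 * k), (1 : ℚ) / q := by
    rw [hT]; ring
  rw [hB, Rat.intCast_add_den, Rat.neg_den]
  exact den_sum_one_div_dvd_prod _

theorem squarefree_den_bernoulli {n : ℕ} (hn : Even n) : Squarefree (bernoulli n).den := by
  obtain ⟨k, rfl⟩ := hn
  rw [← two_mul]
  refine Squarefree.squarefree_of_dvd (den_bernoulli_two_mul_dvd_prod k) ?_
  refine Finset.squarefree_prod_of_pairwise_isCoprime (fun q hq r hr hqr => ?_) fun q hq => ?_
  · exact Nat.coprime_iff_isRelPrime.mp ((Nat.coprime_primes (prime_of_mem_vonStaudtPrimes hq)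
      (prime_of_mem_vonStaudtPrimes hr)).mpr hqr)
  · exact (prime_of_mem_vonStaudtPrimes hq).prime.squarefree

theorem prime_dvd_den_bernoulli {p k : ℕ} (hp : p.Prime) (hk : 0 < k) (hpk : p - 1 ∣ 2 * k) :
    p ∣ (bernoulli (2 * k)).den := by
  obtain ⟨T, hT⟩ := Bernoulli.vonStaudt_clausen k
  have hpQ : p ∈ vonStaudtPrimes (2 * k) :=
    mem_filter.mpr ⟨mem_range.mpr (by have := Nat.le_of_dvd (by omega) hpk; omega), hp, hpk⟩
  set R := ∑ q ∈ (vonStaudtPrimes (2 * k)).erase p, (1 : ℚ) / q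
  rw [← add_sum_erase _ _ hpQ] at hT
  have hinv : ((p : ℚ)⁻¹) = T + -(bernoulli (2 * k) + R) := by rw [hT]; ring
  have hden : p ∣ (bernoulli (2 * k)).den * ∏ q ∈ (vonStaudtPrimes (2 * k)).erase p, q := by
    have h1 := congrArg Rat.den hinv
    rw [Rat.inv_natCast_den, if_neg hp.ne_zero, Rat.intCast_add_den, Rat.neg_den] at h1
    exact (dvd_of_eq h1).trans ((Rat.add_den_dvd _ _).trans
      (mul_dvd_mul_left _ (den_sum_one_div_dvd_prod _)))
  refine (hp.dvd_mul.mp hden).resolve_right fun h => ?_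
  obtain ⟨q, hq, hpq⟩ := (Prime.dvd_finsetProd_iff hp.prime _).mp h
  have hq' := prime_of_mem_vonStaudtPrimes (mem_of_mem_erase hq)
  exact ne_of_mem_erase hq ((Nat.prime_dvd_prime_iff_eq hp hq').mp hpq).symm

theorem six_dvd_den_bernoulli {k : ℕ} (hk : 2 ≤ k) (hke : Even k) : 6 ∣ (bernoulli k).den := by
  obtain ⟨l, rfl⟩ := hke
  rw [← two_mul] at *
  exact Nat.Coprime.mul_dvd_of_dvd_of_dvd (by norm_num)
    (prime_dvd_den_bernoulli Nat.prime_two (by omega) (by simp))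
    (prime_dvd_den_bernoulli Nat.prime_three (by omega) (by simp))

theorem sum_range_pow_sub_bernoulli_mul (k m : ℕ) :
    ∑ j ∈ range m, (j : ℚ) ^ k - bernoulli k * m =
      ∑ i ∈ range k, bernoulli i * k.choose i * (m : ℚ) ^ (k + 1 - i) / (k + 1 - i : ℕ) := by
  have hlast : bernoulli k * ((k + 1).choose k : ℕ) * (m : ℚ) ^ (k + 1 - k) / (k + 1) =
      bernoulli k * m := by
    rw [Nat.choose_succ_self_right, Nat.add_sub_cancel_left]; push_cast; field_simp
  rw [sum_range_pow, sum_range_succ, hlast, add_sub_cancel_right]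
  refine sum_congr rfl fun i hi => ?_
  have hik := mem_range.mp hi
  have h : (k.choose i : ℚ) * (k + 1) = (k + 1).choose i * (k + 1 - i : ℕ) := by
    exact_mod_cast Nat.choose_mul_succ_eq k i
  have hs : ((k + 1 - i : ℕ) : ℚ) ≠ 0 := by exact_mod_cast (by omega : k + 1 - i ≠ 0)
  rw [div_eq_div_iff (by positivity) hs]
  linear_combination (-(bernoulli i * (m : ℚ) ^ (k + 1 - i))) * h

theorem S_eq_sum_range {k : ℕ} (hk : k ≠ 0) (m : ℕ) : S k m = ∑ j ∈ range m, j ^ k := by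
  rcases Nat.eq_zero_or_pos m with rfl | hm
  · simp [S]
  · rw [range_eq_Ico, sum_eq_sum_Ico_succ_bot hm, zero_pow hk, zero_add, S]

theorem padicValNat_add_three_le {p s : ℕ} (hp : p.Prime) (hs : 3 ≤ s) :
    padicValNat p s + 3 ≤ s + padicValNat p 6 := by
  have : Fact p.Prime := ⟨hp⟩
  set v := padicValNat p s
  have hps : p ^ v ≤ s := Nat.le_of_dvd (by omega) pow_padicValNat_dvd
  have h2v : 2 * v ≤ 2 ^ v := by
    induction v with
    | zero => simp
    | succ n ih => rw [pow_succ]; have := Nat.one_le_two_pow (n := n); omega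
  have h2p : 2 ^ v ≤ p ^ v := Nat.pow_le_pow_left hp.two_le v
  have hpv : v = 0 ∨ p ≤ s := by
    rcases Nat.eq_zero_or_pos v with h | h
    · exact .inl h
    · exact .inr ((Nat.le_self_pow h.ne' p).trans hps)
  rcases (show p ∣ 6 ∨ 5 ≤ p by
      by_contra! h
      obtain ⟨h6, h5⟩ := h
      have := hp.two_le
      interval_cases p <;> norm_num at *) with h6 | h5
  · have := one_le_padicValNat_of_dvd (by norm_num) h6
    omega
  · omega

theorem padicNorm_natCast_eq {p n : ℕ} (hn : n ≠ 0) :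
    padicNorm p n = (p : ℚ) ^ (-(padicValNat p n : ℤ)) := by
  rw [padicNorm.eq_zpow_of_nonzero (by exact_mod_cast hn), padicValRat.of_nat]

section

variable {p : ℕ} [Fact p.Prime]

theorem padicNorm_natCast_le_of_pow_dvd {n e : ℕ} (h : p ^ e ∣ n) :
    padicNorm p n ≤ (p : ℚ) ^ (-(e : ℤ)) := by
  simpa using padicNorm.dvd_iff_norm_le.mp (Int.natCast_dvd_natCast.mpr h)

theorem padicNorm_le_of_squarefree_den {q : ℚ} (hq : Squarefree q.den) : padicNorm p q ≤ p := by
  rcases eq_or_ne q 0 with rfl | hq0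
  · simp
  have hden : padicValNat p q.den ≤ 1 := by
    rw [← Nat.factorization_def _ Fact.out]; exact hq.natFactorization_le_one p
  rw [padicNorm.eq_zpow_of_nonzero hq0, padicValRat_def]
  calc (p : ℚ) ^ (-(padicValInt p q.num - padicValNat p q.den : ℤ))
      ≤ (p : ℚ) ^ (1 : ℤ) :=
        zpow_le_zpow_right₀ (by exact_mod_cast (Fact.out : p.Prime).one_le) (by omega)
    _ = p := zpow_one _

theorem padicNorm_six_mul_mul_pow_div_le {b : ℚ} {c s m : ℕ} (hb : padicNorm p b ≤ p)
    (hs : 3 ≤ s) (hpm : p ∣ m) (hm : m ≠ 0) :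
    padicNorm p (6 * (b * c * m ^ s / s)) ≤ (p : ℚ) ^ (-(2 * padicValNat p m : ℤ)) := by
  set a := padicValNat p m
  have ha : 1 ≤ a := one_le_padicValNat_of_dvd hm hpm
  have hp : (1 : ℚ) < p := by exact_mod_cast (Fact.out : p.Prime).one_lt
  have hp0 : (p : ℚ) ≠ 0 := by positivity
  have hnum : p ^ (padicValNat p 6 + s * a) ∣ 6 * m ^ s := by
    rw [pow_add, pow_mul']
    exact mul_dvd_mul pow_padicValNat_dvd (pow_dvd_pow_of_dvd pow_padicValNat_dvd s)
  have hexp := padicValNat_add_three_le (Fact.out : p.Prime) hs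
  rw [show 6 * (b * c * (m : ℚ) ^ s / s) = b * c * ((6 * m ^ s : ℕ) : ℚ) / s by push_cast; ring,
    padicNorm.div, padicNorm.mul, padicNorm.mul, padicNorm_natCast_eq (n := s) (by omega),
    div_le_iff₀ (zpow_pos (by positivity) _), ← zpow_add₀ hp0]
  calc padicNorm p b * padicNorm p c * padicNorm p ((6 * m ^ s : ℕ) : ℚ)
      ≤ p * 1 * (p : ℚ) ^ (-((padicValNat p 6 + s * a : ℕ) : ℤ)) := by
        gcongr
        exacts [padicNorm.nonneg _, padicNorm.nonneg _, padicNorm.of_nat c,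
          padicNorm_natCast_le_of_pow_dvd hnum]
    _ = (p : ℚ) ^ (1 - ((padicValNat p 6 + s * a : ℕ) : ℤ)) := by
        rw [mul_one, zpow_sub₀ hp0, zpow_one, zpow_neg, div_eq_mul_inv]
    _ ≤ _ := by
        apply zpow_le_zpow_right₀ hp.le
        push_cast
        nlinarith

theorem padicNorm_six_mul_sum_range_pow_sub_le {k m : ℕ} (hk : 2 ≤ k) (hke : Even k)
    (hpm : p ∣ m) (hm : m ≠ 0) :
    padicNorm p (6 * (∑ j ∈ range m, (j : ℚ) ^ k - bernoulli k * m)) ≤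
      (p : ℚ) ^ (-(2 * padicValNat p m : ℤ)) := by
  rw [sum_range_pow_sub_bernoulli_mul, mul_sum]
  refine padicNorm.sum_le' (fun i hi => ?_) (zpow_nonneg (Nat.cast_nonneg p) _)
  have hik := mem_range.mp hi
  rcases Nat.even_or_odd i with hie | hio
  · have hB := padicNorm_le_of_squarefree_den (p := p) (squarefree_den_bernoulli hie)
    exact padicNorm_six_mul_mul_pow_div_le hB
      (by obtain ⟨u, rfl⟩ := hke; obtain ⟨v, rfl⟩ := hie; omega) hpm hm
  rcases eq_or_ne i 1 with rfl | hi1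
  · have hterm : 6 * (bernoulli 1 * k.choose 1 * (m : ℚ) ^ (k + 1 - 1) / (k + 1 - 1 : ℕ)) =
        -((3 * m ^ k : ℕ) : ℚ) := by
      rw [bernoulli_one, Nat.choose_one_right, Nat.add_sub_cancel]
      push_cast
      field_simp
      ring
    have hdvd : p ^ (2 * padicValNat p m) ∣ 3 * m ^ k := by
      rw [pow_mul']
      exact Dvd.dvd.mul_left ((pow_dvd_pow_of_dvd pow_padicValNat_dvd 2).trans (pow_dvd_pow m hk)) 3
    rw [hterm, padicNorm.neg]
    exact_mod_cast padicNorm_natCast_le_of_pow_dvd hdvd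
  · rw [bernoulli_eq_zero_of_odd hio (by obtain ⟨u, rfl⟩ := hio; omega)]
    simpa using zpow_nonneg (Nat.cast_nonneg (α := ℚ) p) _

end

theorem sq_dvd_den_mul_S_sub_num_mul {k : ℕ} (hk : 2 ≤ k) (hke : Even k) (m : ℕ) :
    (m : ℤ) ^ 2 ∣ (bernoulli k).den * S k m - (bernoulli k).num * m := by
  set X : ℤ := (bernoulli k).den * S k m - (bernoulli k).num * m
  obtain ⟨d, hd⟩ := six_dvd_den_bernoulli hk hke
  have hX : (X : ℚ) = d * (6 * (∑ j ∈ range m, (j : ℚ) ^ k - bernoulli k * m)) := by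
    push_cast [X, S_eq_sum_range (by omega : k ≠ 0)]
    rw [← Rat.den_mul_eq_num, hd]
    push_cast
    ring
  rcases eq_or_ne m 0 with rfl | hm
  · simp [X, S]
  rw [← Int.natCast_pow, Int.natCast_dvd, Nat.dvd_iff_prime_pow_dvd_dvd]
  intro p e hp hpe
  have : Fact p.Prime := ⟨hp⟩
  have he : e ≤ 2 * padicValNat p m := by
    rw [← padicValNat.pow]
    exact (padicValNat_dvd_iff_le (pow_ne_zero 2 hm)).mp hpe
  by_cases hpm : p ∣ m
  · refine (pow_dvd_pow p he).trans (Int.natCast_dvd.mp ?_)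
    rw [padicNorm.dvd_iff_norm_le, hX, padicNorm.mul]
    calc padicNorm p d * padicNorm p (6 * (∑ j ∈ range m, (j : ℚ) ^ k - bernoulli k * m))
        ≤ 1 * (p : ℚ) ^ (-(2 * padicValNat p m : ℤ)) := by
          gcongr
          exacts [padicNorm.nonneg _, padicNorm.of_nat d,
            padicNorm_six_mul_sum_range_pow_sub_le hk hke hpm hm]
      _ = _ := by push_cast; ring
  · rw [padicValNat.eq_zero_of_not_dvd hpm, mul_zero, Nat.le_zero] at he
    rw [he, pow_zero]
    exact one_dvd _

theorem Int.gcd_sq_eq_mul_gcd {x n : ℤ} {m : ℕ} (h : (m : ℤ) ^ 2 ∣ x - n * m) :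
    Int.gcd x (m ^ 2) = m * Int.gcd n m := by
  obtain ⟨t, ht⟩ := h
  rw [show x = m * n + t * (m * m) by linear_combination ht, sq, Int.gcd_add_mul_right_left,
    Int.gcd_mul_left, Int.natAbs_natCast]

theorem Nat.gcd_mul_gcd_eq_of_gcd_mul_eq {x d n m : ℕ} (hd : Squarefree d) (hnd : n.Coprime d)
    (h : Nat.gcd (d * x) (m ^ 2) = m * Nat.gcd n m) :
    Nat.gcd x (m ^ 2) * Nat.gcd d m = m * Nat.gcd n m := by
  rcases eq_or_ne m 0 with rfl | hm
  · simpa [mul_comm] using h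
  rcases eq_or_ne x 0 with rfl | hx
  · rw [mul_zero, Nat.gcd_zero_left, sq] at h
    have hmn : m ∣ n := Nat.gcd_eq_right_iff_dvd.mp (Nat.eq_of_mul_eq_mul_left (by omega) h).symm
    rw [Nat.gcd_zero_left, (Nat.Coprime.coprime_dvd_left hmn hnd).symm.gcd_eq_one, mul_one, sq, h]
  rcases eq_or_ne n 0 with rfl | hn
  · obtain rfl : d = 1 := (Nat.coprime_zero_left d).mp hnd
    rw [Nat.gcd_one_left, mul_one, ← h, one_mul]
  have hd0 := hd.ne_zero
  have hm2 : m ^ 2 ≠ 0 := pow_ne_zero 2 hm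
  refine Nat.eq_of_factorization_eq ?_ ?_ fun p => ?_
  · exact mul_ne_zero (Nat.gcd_ne_zero_right hm2) (Nat.gcd_ne_zero_right hm)
  · exact mul_ne_zero hm (Nat.gcd_ne_zero_right hm)
  have hp := congrArg (·.factorization p) h
  have hcop := congrArg (·.factorization p) hnd.gcd_eq_one
  have hsq := hd.natFactorization_le_one p
  simp only [Nat.factorization_mul hd0 hx, Nat.factorization_mul hm (Nat.gcd_ne_zero_right hm),
    Nat.factorization_gcd (mul_ne_zero hd0 hx) hm2, Nat.factorization_gcd hn hm,
    Nat.factorization_gcd hn hd0, Nat.factorization_pow, Nat.factorization_one] at hp hcop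
  rw [Nat.factorization_mul (Nat.gcd_ne_zero_right hm2) (Nat.gcd_ne_zero_right hm),
    Nat.factorization_mul hm (Nat.gcd_ne_zero_right hm), Nat.factorization_gcd hx hm2,
    Nat.factorization_gcd hd0 hm, Nat.factorization_gcd hn hm, Nat.factorization_pow]
  simp only [Finsupp.add_apply, Finsupp.inf_apply, Finsupp.smul_apply, smul_eq_mul,
    Finsupp.coe_zero, Pi.zero_apply] at hp hcop ⊢
  -- at a prime dividing `d`, coprimality makes `p ∤ n`, and then `hp` forces `v_p(x) + 1 = v_p(m)`
  omega

theorem gcd_S_m_sq_general (k m : ℕ) (hk : 2 ≤ k) (hke : Even k) :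
    Nat.gcd (S k m) (m ^ 2) * Nat.gcd (bernoulli k).den m
      = m * Int.gcd (bernoulli k).num (m : ℤ) := by
  have h := Int.gcd_sq_eq_mul_gcd (sq_dvd_den_mul_S_sub_num_mul hk hke m)
  exact Nat.gcd_mul_gcd_eq_of_gcd_mul_eq (squarefree_den_bernoulli hke) (bernoulli k).reduced
    (by exact_mod_cast h)

theorem gcd_S_m_sq (k m : ℕ) (hk : 2 ≤ k) (hke : Even k) (hm : 0 < m) :
    Nat.gcd (S k m) (m ^ 2) * Nat.gcd (bernoulli k).den m
      = m * Int.gcd (bernoulli k).num (m : ℤ) :=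
  gcd_S_m_sq_general k m hk hke
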